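/- The standard flat torus ℝ²/ℤ² has blocking number 4: for any two points x,y of ℝ²/ℤ², the set of all geodesic segments connecting x and y can be blocked by 4 points, and 4 points are in general necessary, so B(ℝ²/ℤ²)=4. -/

import Mathlib

open Set

noncomputable section

/-- The integer lattice `ℤ² ⊆ ℝ²` (with `ℝ²` carrying the Euclidean metric). -/
def intLattice : AddSubgroup (EuclideanSpace ℝ (Fin 2)) where
  carrier := {v | ∀ i, ∃ n : ℤ, v i = n}
  zero_mem' := fun i => ⟨0, by simp⟩
  add_mem' := by
    intro a b ha hb i
    obtain ⟨n, hn⟩ := ha i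
    obtain ⟨m, hm⟩ := hb i
    exact ⟨n + m, by simp [PiLp.add_apply, hn, hm]⟩
  neg_mem' := by
    intro a ha i
    obtain ⟨n, hn⟩ := ha i
    exact ⟨-n, by simp [PiLp.neg_apply, hn]⟩

/-- The standard flat torus `ℝ²/ℤ²`. -/
def FlatTorus : Type := EuclideanSpace ℝ (Fin 2) ⧸ intLattice

/-- The quotient projection `π : ℝ² → ℝ²/ℤ²`. -/
def torusProj : EuclideanSpace ℝ (Fin 2) → FlatTorus := QuotientAddGroup.mk

/-- A geodesic segment of the standard flat torus: the projection of an
affine segment `t ↦ x + t • v` (with `v` a unit vector) of `ℝ²`, traversed at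
unit speed for time `a > 0`. -/
def IsTorusGeodesicSegment (γ : ℝ → FlatTorus) (a : ℝ) : Prop :=
  0 < a ∧ ∃ (x v : EuclideanSpace ℝ (Fin 2)), ‖v‖ = 1 ∧
    ∀ t : ℝ, γ t = torusProj (x + t • v)

/-- `S` blocks the pair `(x,y)` on the flat torus: every geodesic segment
connecting `x` and `y` has an interior point lying in `S`. -/
def TorusBlocks (S : Set FlatTorus) (x y : FlatTorus) : Prop :=
  ∀ (γ : ℝ → FlatTorus) (a : ℝ), IsTorusGeodesicSegment γ a →
    γ 0 = x → γ a = y → ∃ t ∈ Set.Ioo 0 a, γ t ∈ S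

/-- The blocking number between two points of the flat torus. -/
def torusBlockingNumber (x y : FlatTorus) : ℕ∞ :=
  sInf {n : ℕ∞ | ∃ S : Set FlatTorus, TorusBlocks S x y ∧ S.encard = n}

/-!
Lift a geodesic segment from `x` to `y` to the affine segment `t ↦ x₀ + t • v` of `ℝ²`. Its
midpoint `z` satisfies `2 • z = x + y` in the group `ℝ²/ℤ²`, and the solutions of this equation
form a coset of the 2-torsion subgroup, which has four elements `π(e/2)`, `e ∈ {0,1}²`. So these
four points block every pair.

Conversely, for `p` in the open unit square the four segments from `0` to the lifts `p - e`,
`e ∈ {0,1}²`, of `π p` have pairwise disjoint interiors in the torus: in a coordinate where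
`e` and `e'` differ, the two interior points differ by a number strictly between two consecutive
integers. Hence any blocking set for `(π 0, π p)` has at least four points.
-/

local notation "ℝ²" => EuclideanSpace ℝ (Fin 2)

instance : AddCommGroup FlatTorus := inferInstanceAs (AddCommGroup (ℝ² ⧸ intLattice))

lemma torusProj_add (u w : ℝ²) : torusProj (u + w) = torusProj u + torusProj w := rfl

lemma torusProj_sub (u w : ℝ²) : torusProj (u - w) = torusProj u - torusProj w := rfl

lemma torusProj_nsmul (n : ℕ) (u : ℝ²) : torusProj (n • u) = n • torusProj u :=
  QuotientAddGroup.mk_nsmul _ u n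

lemma torusProj_surjective : Function.Surjective torusProj := QuotientAddGroup.mk_surjective

lemma torusProj_eq_iff {u w : ℝ²} : torusProj u = torusProj w ↔ -u + w ∈ intLattice :=
  QuotientAddGroup.eq

lemma torusProj_eq_zero_iff {u : ℝ²} : torusProj u = 0 ↔ u ∈ intLattice :=
  QuotientAddGroup.eq_zero_iff u

def unitCorner (e : Fin 2 → Bool) : ℝ² := WithLp.toLp 2 fun i => if e i then 1 else 0

@[simp]
lemma unitCorner_apply (e : Fin 2 → Bool) (i : Fin 2) :
    unitCorner e i = if e i then 1 else 0 := rfl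

lemma unitCorner_mem_intLattice (e : Fin 2 → Bool) : unitCorner e ∈ intLattice := fun i =>
  ⟨if e i then 1 else 0, by split_ifs <;> simp [*]⟩

lemma ENat.card_fin_two_to_bool : ENat.card (Fin 2 → Bool) = 4 := by
  rw [ENat.card_eq_coe_fintype_card]
  rfl

lemma Int.exists_eq_two_mul_add_ite (n : ℤ) :
    ∃ (b : Bool) (k : ℤ), n = 2 * k + if b then 1 else 0 := by
  rcases Int.even_or_odd' n with ⟨k, rfl | rfl⟩
  · exact ⟨false, k, by simp⟩
  · exact ⟨true, k, by simp⟩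

lemma intCast_notMem_Ioo (m n : ℤ) : (n : ℝ) ∉ Ioo (m : ℝ) (m + 1) := by
  rintro ⟨h₁, h₂⟩
  norm_cast at h₁ h₂
  omega

namespace FlatTorus

lemma twoTorsion_subset_range :
    {t : FlatTorus | 2 • t = 0} ⊆ range fun e => torusProj ((2⁻¹ : ℝ) • unitCorner e) := by
  rintro t ht
  obtain ⟨u, rfl⟩ := torusProj_surjective t
  rw [mem_ofPred_eq, ← torusProj_nsmul, torusProj_eq_zero_iff] at ht
  have : ∀ i, ∃ (b : Bool) (k : ℤ), u i = k + (2⁻¹ : ℝ) * if b then 1 else 0 := fun i => by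
    obtain ⟨n, hn⟩ := ht i
    obtain ⟨b, k, rfl⟩ := Int.exists_eq_two_mul_add_ite n
    refine ⟨b, k, ?_⟩
    simp only [PiLp.smul_apply, nsmul_eq_mul, Nat.cast_ofNat] at hn
    split_ifs at hn ⊢ <;> push_cast at hn <;> linarith
  choose e k hk using this
  refine ⟨e, (torusProj_eq_iff.mpr fun i => ⟨-k i, ?_⟩).symm⟩
  simp [hk]

lemma encard_twoTorsion_le : {t : FlatTorus | 2 • t = 0}.encard ≤ 4 :=
  calc {t : FlatTorus | 2 • t = 0}.encard
      ≤ (range fun e => torusProj ((2⁻¹ : ℝ) • unitCorner e)).encard :=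
        encard_mono twoTorsion_subset_range
    _ ≤ ENat.card (Fin 2 → Bool) := by
        rw [← image_univ, ← encard_univ]
        exact encard_image_le _ _
    _ = 4 := ENat.card_fin_two_to_bool

lemma encard_setOf_two_nsmul_eq_le (w : FlatTorus) : {z : FlatTorus | 2 • z = w}.encard ≤ 4 := by
  rcases eq_empty_or_nonempty {z : FlatTorus | 2 • z = w} with h | ⟨z₀, hz₀⟩
  · simp [h]
  have : {z : FlatTorus | 2 • z = w} ⊆ (z₀ + ·) '' {t | 2 • t = 0} := fun z hz =>
    ⟨z - z₀, by simp_all [nsmul_sub], add_sub_cancel z₀ z⟩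
  exact (encard_mono this).trans ((encard_image_le _ _).trans encard_twoTorsion_le)

end FlatTorus

lemma IsTorusGeodesicSegment.two_nsmul_midpoint {γ : ℝ → FlatTorus} {a : ℝ}
    (h : IsTorusGeodesicSegment γ a) : 2 • γ (a / 2) = γ 0 + γ a := by
  obtain ⟨-, x, v, -, hγ⟩ := h
  rw [hγ, hγ, hγ, ← torusProj_nsmul, ← torusProj_add]
  congr 1
  module

lemma torusBlocks_setOf_two_nsmul_eq_add (x y : FlatTorus) :
    TorusBlocks {z | 2 • z = x + y} x y := fun γ a hγ h₀ ha =>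
  ⟨a / 2, ⟨by linarith [hγ.1], by linarith [hγ.1]⟩, by
    rw [mem_ofPred_eq, IsTorusGeodesicSegment.two_nsmul_midpoint hγ, h₀, ha]⟩

lemma TorusBlocks.exists_smul_mem {S : Set FlatTorus} {u w : ℝ²} {y : FlatTorus}
    (hS : TorusBlocks S (torusProj u) y) (hy : torusProj (u + w) = y) (hw : w ≠ 0) :
    ∃ s ∈ Ioo (0 : ℝ) 1, torusProj (u + s • w) ∈ S := by
  have hnorm : 0 < ‖w‖ := norm_pos_iff.mpr hw
  obtain ⟨t, ⟨ht₀, ht₁⟩, htS⟩ :=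
    hS (fun t => torusProj (u + t • ‖w‖⁻¹ • w)) ‖w‖
      ⟨hnorm, u, ‖w‖⁻¹ • w, norm_smul_inv_norm hw, fun _ => rfl⟩
      (by simp) (by rwa [smul_inv_smul₀ hnorm.ne'])
  refine ⟨t / ‖w‖, ⟨div_pos ht₀ hnorm, (div_lt_one hnorm).mpr ht₁⟩, ?_⟩
  rwa [div_eq_mul_inv, mul_smul]

lemma injective_torusProj_smul_sub_unitCorner {p : ℝ²} (hp : ∀ i, p i ∈ Ioo (0 : ℝ) 1)
    {s : (Fin 2 → Bool) → ℝ} (hs : ∀ e, s e ∈ Ioo (0 : ℝ) 1) :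
    Function.Injective fun e => torusProj (s e • (p - unitCorner e)) := by
  intro e e' h
  by_contra hne
  obtain ⟨i, hi⟩ := Function.ne_iff.mp hne
  obtain ⟨n, hn⟩ := torusProj_eq_iff.mp h i
  obtain ⟨hp₀, hp₁⟩ := hp i
  obtain ⟨hs₀, hs₁⟩ := hs e
  obtain ⟨hs₀', hs₁'⟩ := hs e'
  simp only [PiLp.add_apply, PiLp.neg_apply, PiLp.smul_apply, PiLp.sub_apply, unitCorner_apply,
    smul_eq_mul] at hn
  cases he : e i <;> cases he' : e' i <;>
    simp only [he, he', Bool.false_eq_true, ↓reduceIte] at hn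
  · exact hi (he.trans he'.symm)
  · exact intCast_notMem_Ioo (-1) n ⟨by push_cast; nlinarith, by push_cast; nlinarith⟩
  · exact intCast_notMem_Ioo 0 n ⟨by push_cast; nlinarith, by push_cast; nlinarith⟩
  · exact hi (he.trans he'.symm)

lemma four_le_encard_of_torusBlocks {p : ℝ²} (hp : ∀ i, p i ∈ Ioo (0 : ℝ) 1)
    {S : Set FlatTorus} (hS : TorusBlocks S (torusProj 0) (torusProj p)) : 4 ≤ S.encard := by
  have : ∀ e, ∃ s ∈ Ioo (0 : ℝ) 1, torusProj (s • (p - unitCorner e)) ∈ S := fun e => by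
    have hne : p - unitCorner e ≠ 0 := fun h => by
      have h₀ : p 0 - (if e 0 then 1 else 0) = 0 := by simpa using congrArg (· 0) h
      obtain ⟨hp₀, hp₁⟩ := hp 0
      split_ifs at h₀ <;> linarith
    have hy : torusProj (0 + (p - unitCorner e)) = torusProj p := by
      rw [zero_add, torusProj_sub, torusProj_eq_zero_iff.mpr (unitCorner_mem_intLattice e),
        sub_zero]
    simpa using TorusBlocks.exists_smul_mem hS hy hne
  choose s hs hsS using this
  calc (4 : ℕ∞) = ENat.card (Fin 2 → Bool) := ENat.card_fin_two_to_bool.symm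
    _ ≤ (range fun e => torusProj (s e • (p - unitCorner e))).encard :=
      (injective_torusProj_smul_sub_unitCorner hp hs).encard_range
    _ ≤ S.encard := encard_mono (range_subset_iff.mpr hsS)

lemma torusBlockingNumber_le_encard {S : Set FlatTorus} {x y : FlatTorus}
    (hS : TorusBlocks S x y) : torusBlockingNumber x y ≤ S.encard :=
  sInf_le ⟨S, hS, rfl⟩

lemma le_torusBlockingNumber {n : ℕ∞} {x y : FlatTorus}
    (h : ∀ S, TorusBlocks S x y → n ≤ S.encard) : n ≤ torusBlockingNumber x y :=
  le_sInf fun _ ⟨S, hS, hn⟩ => hn ▸ h S hS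

/-- **Example 2.** The standard flat torus `ℝ²/ℤ²` has blocking number `4`:
for any two points `x, y ∈ ℝ²/ℤ²` the set of all geodesic segments connecting
`x` and `y` can be blocked by `4` points, and `4` points are in general
necessary, so `B(ℝ²/ℤ²) = sup_{x,y} B(x,y) = 4`. -/
theorem flatTorus_blockingNumber_eq_four :
    (∀ x y : FlatTorus, ∃ S : Set FlatTorus, TorusBlocks S x y ∧ S.encard ≤ 4) ∧
    (⨆ (x : FlatTorus) (y : FlatTorus), torusBlockingNumber x y) = 4 := by
  have upper (x y : FlatTorus) : ∃ S : Set FlatTorus, TorusBlocks S x y ∧ S.encard ≤ 4 :=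
    ⟨_, torusBlocks_setOf_two_nsmul_eq_add x y, FlatTorus.encard_setOf_two_nsmul_eq_le _⟩
  refine ⟨upper, le_antisymm (iSup₂_le fun x y => ?_) ?_⟩
  · obtain ⟨S, hS, hcard⟩ := upper x y
    exact (torusBlockingNumber_le_encard hS).trans hcard
  · let p : ℝ² := WithLp.toLp 2 fun _ => 2⁻¹
    have hp : ∀ i, p i ∈ Ioo (0 : ℝ) 1 := fun _ => ⟨by norm_num [p], by norm_num [p]⟩
    exact le_iSup₂_of_le (torusProj 0) (torusProj p)
      (le_torusBlockingNumber fun _ => four_le_encard_of_torusBlocks hp)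

end
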